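/- Let A be the n×n adjacency matrix of the directed path graph, i.e., A has ones on the superdiagonal and zeros elsewhere. For 1 ≤ r,s ≤ n let E_{rs} = e_r e_s^T and let L(A,E_{rs}) be the Fréchet derivative of the matrix exponential at A in direction E_{rs}. Then the total network sensitivity S_{rs} = 1^T L(A,E_{rs}) 1 is maximized over all pairs (r,s) at (r,s) = (n,1). -/

import Mathlib

/-!
The path matrix `A` is the nilpotent shift, `(A ^ p) i j = [i + p = j]`, so `A ^ n = 0`, every
`Hmat n r s k` with `k ≥ 2n - 1` vanishes and the series defining `L(A, E_rs)` is a finite sum.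
Moreover `1ᵀ A^p E_rs A^q 1` is the `r`-th column sum of `A ^ p` times the `s`-th row sum of
`A ^ q`, i.e. `[p ≤ r] * [s + q < n]`. Both factors are largest at `r = n - 1`, `s = 0`, so the
sensitivity series is dominated term by term.
-/

/-- The n×n adjacency matrix of the directed path: ones on the superdiagonal. -/
def pathAdj (n : ℕ) : Matrix (Fin n) (Fin n) ℝ :=
  Matrix.of fun i j => if (i : ℕ) + 1 = (j : ℕ) then 1 else 0

/-- `H_{rs}^{(k)} = Σ_{p+q=k} A^p (e_r e_sᵀ) A^q`. -/
def Hmat (n : ℕ) (r s : Fin n) (k : ℕ) : Matrix (Fin n) (Fin n) ℝ :=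
  ∑ p ∈ Finset.range (k + 1),
    (pathAdj n) ^ p * Matrix.single r s (1 : ℝ) * (pathAdj n) ^ (k - p)

/-- `1ᵀ M 1`, the sum of all entries of a matrix. -/
def totSum {n : ℕ} (M : Matrix (Fin n) (Fin n) ℝ) : ℝ := ∑ i, ∑ j, M i j

/-- The Fréchet derivative of the matrix exponential at `A` in direction `E_{rs}`:
`L(A, E_{rs}) = Σ_{k≥1} (1/k!) Σ_{p+q=k-1} A^p E_{rs} A^q`. -/
noncomputable def frechetExp (n : ℕ) (r s : Fin n) : Matrix (Fin n) (Fin n) ℝ :=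
  ∑' k : ℕ, ((Nat.factorial (k + 1) : ℝ))⁻¹ • Hmat n r s k

/-- The total network sensitivity `S_{rs} = 1ᵀ L(A, E_{rs}) 1`. -/
noncomputable def sens (n : ℕ) (r s : Fin n) : ℝ := totSum (frechetExp n r s)

open Matrix Finset

theorem Matrix.mul_single_mul_apply {ι R : Type*} [Fintype ι] [DecidableEq ι]
    [NonUnitalNonAssocSemiring R] (M N : Matrix ι ι R) (r s i j : ι) (c : R) :
    (M * single r s c * N) i j = M i r * c * N s j := by
  simp [mul_apply, single, ite_and]

theorem ite_le_ite_of_imp {α : Type*} [Preorder α] {P Q : Prop} [Decidable P] [Decidable Q]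
    {a b : α} (hab : a ≤ b) (h : P → Q) : (if P then b else a) ≤ if Q then b else a := by
  split_ifs with hP hQ
  exacts [le_rfl, absurd (h hP) hQ, hab, le_rfl]

section totSum

variable {n : ℕ}

theorem totSum_sum {β : Type*} (t : Finset β) (M : β → Matrix (Fin n) (Fin n) ℝ) :
    totSum (∑ k ∈ t, M k) = ∑ k ∈ t, totSum (M k) := by
  simp only [totSum, Matrix.sum_apply]
  rw [sum_comm (s := t)]
  exact sum_congr rfl fun i _ => sum_comm

theorem totSum_smul (c : ℝ) (M : Matrix (Fin n) (Fin n) ℝ) : totSum (c • M) = c * totSum M := by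
  simp only [totSum, Matrix.smul_apply, smul_eq_mul, mul_sum]

theorem totSum_mul_single_mul (M N : Matrix (Fin n) (Fin n) ℝ) (r s : Fin n) :
    totSum (M * single r s 1 * N) = (∑ i, M i r) * ∑ j, N s j := by
  simp only [totSum, mul_single_mul_apply, mul_one, sum_mul_sum]

end totSum

theorem pathAdj_pow_apply (n p : ℕ) (i j : Fin n) :
    (pathAdj n ^ p) i j = if (i : ℕ) + p = j then 1 else 0 := by
  induction p generalizing j with
  | zero => simp [one_apply, Fin.ext_iff]
  | succ p ih =>
    rw [pow_succ, mul_apply]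
    simp_rw [ih]
    simp only [pathAdj, of_apply, ite_mul, one_mul, zero_mul]
    rw [Fin.sum_univ_eq_sum_range
      (fun x => if (i : ℕ) + p = x then if x + 1 = (j : ℕ) then (1 : ℝ) else 0 else 0)]
    simp only [sum_ite_eq, mem_range]
    have := j.isLt
    split_ifs <;> first | rfl | (exfalso; omega)

theorem pathAdj_pow_eq_zero {n p : ℕ} (hp : n ≤ p) : pathAdj n ^ p = 0 := by
  ext i j
  rw [pathAdj_pow_apply, if_neg (by omega), Matrix.zero_apply]

theorem sum_col_pathAdj_pow (n p : ℕ) (r : Fin n) :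
    ∑ i, (pathAdj n ^ p) i r = if p ≤ r then 1 else 0 := by
  simp only [pathAdj_pow_apply]
  rw [Fin.sum_univ_eq_sum_range (fun i => if i + p = (r : ℕ) then (1 : ℝ) else 0)]
  split_ifs with h
  · rw [sum_eq_single ((r : ℕ) - p)] <;> intros <;> simp_all <;> omega
  · exact sum_eq_zero fun i _ => if_neg (by omega)

theorem sum_row_pathAdj_pow (n p : ℕ) (s : Fin n) :
    ∑ j, (pathAdj n ^ p) s j = if s + p < n then 1 else 0 := by
  simp only [pathAdj_pow_apply]
  rw [Fin.sum_univ_eq_sum_range (fun j => if (s : ℕ) + p = j then (1 : ℝ) else 0)]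
  simp [sum_ite_eq]

theorem Hmat_eq_zero {n k : ℕ} (r s : Fin n) (hk : 2 * n - 1 ≤ k) : Hmat n r s k = 0 := by
  refine sum_eq_zero fun p _ => ?_
  rcases le_or_gt n p with h | h
  · simp [pathAdj_pow_eq_zero h]
  · have : n ≤ k - p := by omega
    simp [pathAdj_pow_eq_zero this]

theorem totSum_Hmat (n : ℕ) (r s : Fin n) (k : ℕ) :
    totSum (Hmat n r s k) = ∑ p ∈ range (k + 1),
      (if p ≤ r then 1 else 0) * (if s + (k - p) < n then 1 else 0) := by
  simp only [Hmat, totSum_sum, totSum_mul_single_mul, sum_col_pathAdj_pow,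
    sum_row_pathAdj_pow]

theorem totSum_Hmat_le (n : ℕ) (hn : 0 < n) (r s : Fin n) (k : ℕ) :
    totSum (Hmat n r s k) ≤ totSum (Hmat n ⟨n - 1, Nat.sub_one_lt_of_lt hn⟩ ⟨0, hn⟩ k) := by
  rw [totSum_Hmat, totSum_Hmat]
  refine sum_le_sum fun p _ => ?_
  have := r.isLt
  gcongr <;> refine ite_le_ite_of_imp zero_le_one fun _ => ?_ <;> dsimp only <;> omega

theorem sens_eq_sum (n : ℕ) (r s : Fin n) :
    sens n r s = ∑ k ∈ range (2 * n - 1), ((k + 1).factorial : ℝ)⁻¹ * totSum (Hmat n r s k) := by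
  rw [sens, frechetExp, tsum_eq_sum (s := range (2 * n - 1)), totSum_sum]
  · simp only [totSum_smul]
  · intro k hk
    rw [Hmat_eq_zero r s (by simpa using hk), smul_zero]

/-- the total network sensitivity `S_{rs}` for the directed path graph is
maximized over all pairs `(r,s)` at `(r,s) = (n,1)` (i.e. `(n-1, 0)` in 0-based indexing). -/
theorem sens_max (n : ℕ) (hn : 0 < n) (r s : Fin n) :
    sens n r s ≤ sens n (⟨n - 1, by omega⟩ : Fin n) (⟨0, hn⟩ : Fin n) := by
  rw [sens_eq_sum, sens_eq_sum]
  gcongr with k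
  exact totSum_Hmat_le n hn r s k
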